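/- Let R be a commutative ring, let x, y ∈ SL₂(R), let ε ∈ {1, −1}, and set y₁ = x²·y·x^{2ε}·y⁻¹. Then for every integer k ≥ 1, tr(x² · y₁^{k}) = tr(x²) · ( Σ_{i=1}^{k} (−1)^{k−i} tr(y₁^{i}) + (−1)^{k} ). -/

import Mathlib

/-!
Put `a = x²`, `u = y x^{2ε} y⁻¹` and `M = y₁ = a u`; then `a` and `u` have the same trace and
determinant. By Cayley–Hamilton every power of `M` is a combination of `1` and `M`, and
`tr(aM) = tr(uM)`, so `tr(a Mⁿ) = tr(u Mⁿ)` for all `n`. Writing `tr a · 1 = a + adj a` and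
`adj a · a = 1` gives `tr(a Mⁿ⁺¹) + tr(u Mⁿ) = tr a · tr Mⁿ⁺¹`, a first-order recurrence for
`tr(a Mⁿ)` whose solution is the alternating sum.
-/

theorem Finset.sum_Icc_one_neg_one_pow_mul_succ {R : Type*} [CommRing R] (g : ℕ → R) (k : ℕ) :
    ∑ i ∈ Finset.Icc 1 (k + 1), (-1 : R) ^ (k + 1 - i) * g i
      = g (k + 1) - ∑ i ∈ Finset.Icc 1 k, (-1 : R) ^ (k - i) * g i := by
  rw [Finset.sum_Icc_succ_top (by omega), Nat.sub_self, pow_zero, one_mul, sub_eq_neg_add,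
    ← Finset.sum_neg_distrib]
  congr 1
  refine Finset.sum_congr rfl fun i hi => ?_
  rw [Nat.sub_add_comm (Finset.mem_Icc.mp hi).2, pow_succ]
  ring

theorem eq_alternating_sum_of_add_eq {R : Type*} [CommRing R] (f g : ℕ → R) (c : R)
    (h0 : f 0 = c) (hsucc : ∀ n, f (n + 1) + f n = c * g (n + 1)) (k : ℕ) :
    f k = c * (∑ i ∈ Finset.Icc 1 k, (-1 : R) ^ (k - i) * g i + (-1 : R) ^ k) := by
  induction k with
  | zero => simp [h0]
  | succ k ih =>
    rw [Finset.sum_Icc_one_neg_one_pow_mul_succ, eq_sub_of_add_eq (hsucc k), ih, pow_succ]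
    ring

namespace Matrix

variable {R : Type*} [CommRing R]

theorem adjugate_fin_two_eq_trace_smul_sub (A : Matrix (Fin 2) (Fin 2) R) :
    A.adjugate = A.trace • 1 - A := by
  rw [adjugate_fin_two]
  ext i j
  fin_cases i <;> fin_cases j <;> simp [trace_fin_two]

theorem mul_self_eq_trace_smul_sub_det_smul (A : Matrix (Fin 2) (Fin 2) R) :
    A * A = A.trace • A - A.det • 1 := by
  have h := mul_adjugate A
  rw [adjugate_fin_two_eq_trace_smul_sub, Matrix.mul_sub, Matrix.mul_smul, Matrix.mul_one] at h
  rw [← h]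
  abel

theorem exists_pow_eq_smul_add_smul_one_fin_two (A : Matrix (Fin 2) (Fin 2) R) (n : ℕ) :
    ∃ p q : R, A ^ n = p • A + q • 1 := by
  induction n with
  | zero => exact ⟨0, 1, by simp⟩
  | succ n ih =>
    obtain ⟨p, q, h⟩ := ih
    refine ⟨p * A.trace + q, -(p * A.det), ?_⟩
    rw [pow_succ', h, Matrix.mul_add, Matrix.mul_smul, Matrix.mul_smul, Matrix.mul_one,
      mul_self_eq_trace_smul_sub_det_smul]
    simp only [smul_sub, smul_smul, add_smul, neg_smul]
    abel

theorem trace_adjugate_fin_two (A : Matrix (Fin 2) (Fin 2) R) : A.adjugate.trace = A.trace := by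
  rw [adjugate_fin_two_eq_trace_smul_sub, trace_sub, trace_smul, trace_one, Fintype.card_fin,
    smul_eq_mul]
  ring

variable {a u : Matrix (Fin 2) (Fin 2) R}

theorem trace_mul_mul_self_eq_of_trace_eq_of_det_eq (htr : a.trace = u.trace)
    (hdet : a.det = u.det) :
    (a * (a * u)).trace = (u * (a * u)).trace := by
  rw [← Matrix.mul_assoc, ← Matrix.mul_assoc, trace_mul_cycle u a u, trace_mul_comm (u * u),
    mul_self_eq_trace_smul_sub_det_smul, mul_self_eq_trace_smul_sub_det_smul]
  simp only [sub_mul, Matrix.mul_sub, smul_mul, Matrix.mul_smul, Matrix.one_mul, Matrix.mul_one,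
    trace_sub, trace_smul, smul_eq_mul, htr, hdet]

theorem trace_mul_pow_eq_of_trace_eq_of_det_eq (htr : a.trace = u.trace)
    (hdet : a.det = u.det) (n : ℕ) :
    (a * (a * u) ^ n).trace = (u * (a * u) ^ n).trace := by
  obtain ⟨p, q, h⟩ := exists_pow_eq_smul_add_smul_one_fin_two (a * u) n
  simp only [h, Matrix.mul_add, Matrix.mul_smul, Matrix.mul_one, trace_add, trace_smul, htr,
    trace_mul_mul_self_eq_of_trace_eq_of_det_eq htr hdet]

theorem trace_mul_pow_succ_add_of_trace_eq_of_det_eq (htr : a.trace = u.trace)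
    (hdet : a.det = u.det) (n : ℕ) :
    (a * (a * u) ^ (n + 1)).trace + a.det * (a * (a * u) ^ n).trace
      = a.trace * ((a * u) ^ (n + 1)).trace := by
  have hsplit : a.trace • (1 : Matrix (Fin 2) (Fin 2) R) = a + a.adjugate := by
    rw [adjugate_fin_two_eq_trace_smul_sub]; abel
  calc (a * (a * u) ^ (n + 1)).trace + a.det * (a * (a * u) ^ n).trace
      = (a * (a * u) ^ (n + 1)).trace + (a.adjugate * a * (u * (a * u) ^ n)).trace := by
        rw [adjugate_mul, smul_mul, Matrix.one_mul, trace_smul, smul_eq_mul,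
          trace_mul_pow_eq_of_trace_eq_of_det_eq htr hdet n]
    _ = ((a + a.adjugate) * (a * u) ^ (n + 1)).trace := by
        rw [add_mul, trace_add, pow_succ', Matrix.mul_assoc, Matrix.mul_assoc]
    _ = a.trace * ((a * u) ^ (n + 1)).trace := by
        rw [← hsplit, smul_mul, Matrix.one_mul, trace_smul, smul_eq_mul]

namespace SpecialLinearGroup

theorem trace_inv_fin_two (A : SpecialLinearGroup (Fin 2) R) :
    (↑(A⁻¹) : Matrix (Fin 2) (Fin 2) R).trace = (↑A : Matrix (Fin 2) (Fin 2) R).trace :=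
  trace_adjugate_fin_two _

theorem trace_conj (g A : SpecialLinearGroup (Fin 2) R) :
    (↑(g * A * g⁻¹) : Matrix (Fin 2) (Fin 2) R).trace
      = (↑A : Matrix (Fin 2) (Fin 2) R).trace := by
  rw [coe_mul, trace_mul_comm, ← coe_mul, inv_mul_cancel_left]

end SpecialLinearGroup

end Matrix

open Matrix Matrix.SpecialLinearGroup in
theorem trace_sq_mul_pow_eq_sum_general
    (R : Type*) [CommRing R] (x y : Matrix.SpecialLinearGroup (Fin 2) R)
    (ε : ℤ) (hε : ε = 1 ∨ ε = -1) (k : ℕ) :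
    Matrix.trace
      ((x ^ 2 * (x ^ 2 * y * x ^ (2 * ε) * y⁻¹) ^ k :
        Matrix.SpecialLinearGroup (Fin 2) R) : Matrix (Fin 2) (Fin 2) R)
    = Matrix.trace ((x ^ 2 : Matrix.SpecialLinearGroup (Fin 2) R) : Matrix (Fin 2) (Fin 2) R)
        * (∑ i ∈ Finset.Icc 1 k, (-1 : R) ^ (k - i) *
            Matrix.trace (((x ^ 2 * y * x ^ (2 * ε) * y⁻¹) ^ i :
              Matrix.SpecialLinearGroup (Fin 2) R) : Matrix (Fin 2) (Fin 2) R)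
          + (-1 : R) ^ k) := by
  set a : Matrix (Fin 2) (Fin 2) R := ↑(x ^ 2)
  set u : Matrix (Fin 2) (Fin 2) R := ↑(y * x ^ (2 * ε) * y⁻¹)
  have hy₁ (n : ℕ) :
      (↑((x ^ 2 * y * x ^ (2 * ε) * y⁻¹) ^ n) : Matrix (Fin 2) (Fin 2) R) = (a * u) ^ n := by
    rw [← coe_mul, ← coe_pow, mul_assoc, mul_assoc, mul_assoc]
  have htr : a.trace = u.trace := by
    rw [SpecialLinearGroup.trace_conj]
    rcases hε with rfl | rfl
    · rfl
    · rw [show x ^ (2 * -1 : ℤ) = (x ^ 2)⁻¹ by group, trace_inv_fin_two]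
  have hdet : a.det = u.det := by simp only [a, u, det_coe]
  have hrec (n : ℕ) :
      (a * (a * u) ^ (n + 1)).trace + (a * (a * u) ^ n).trace
        = a.trace * ((a * u) ^ (n + 1)).trace := by
    simpa only [a, det_coe, one_mul] using trace_mul_pow_succ_add_of_trace_eq_of_det_eq htr hdet n
  simp_rw [coe_mul (x ^ 2), hy₁]
  refine eq_alternating_sum_of_add_eq (fun n ↦ (a * (a * u) ^ n).trace) _ _ ?_ hrec k
  rw [pow_zero, Matrix.mul_one]

/-- Positive-exponent summation formula of Lemma 2.2: for `x, y ∈ SL₂(R)`, `ε = ±1`,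
`y₁ = x²·y·x^{2ε}·y⁻¹` and any integer `k ≥ 1`,
`tr(x² · y₁^k) = tr(x²)·(∑_{i=1}^{k} (-1)^{k-i} tr(y₁^i) + (-1)^k)`. -/
theorem trace_sq_mul_pow_eq_sum
    (R : Type*) [CommRing R] (x y : Matrix.SpecialLinearGroup (Fin 2) R)
    (ε : ℤ) (hε : ε = 1 ∨ ε = -1) (k : ℕ) (hk : 1 ≤ k) :
    Matrix.trace
      ((x ^ 2 * (x ^ 2 * y * x ^ (2 * ε) * y⁻¹) ^ k :
        Matrix.SpecialLinearGroup (Fin 2) R) : Matrix (Fin 2) (Fin 2) R)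
    = Matrix.trace ((x ^ 2 : Matrix.SpecialLinearGroup (Fin 2) R) : Matrix (Fin 2) (Fin 2) R)
        * (∑ i ∈ Finset.Icc 1 k, (-1 : R) ^ (k - i) *
            Matrix.trace (((x ^ 2 * y * x ^ (2 * ε) * y⁻¹) ^ i :
              Matrix.SpecialLinearGroup (Fin 2) R) : Matrix (Fin 2) (Fin 2) R)
          + (-1 : R) ^ k) :=
  trace_sq_mul_pow_eq_sum_general R x y ε hε k
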